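/- arXiv:1204.5155 — 12 statements merged into one kernel-verified Lean document; each statement's English description precedes it below -/
import Mathlib

section
/- Let (g,[·,·],α,ε) be a color Hom-Lie algebra and β: g → g a weak morphism (i.e., β([x,y]) = [β(x),β(y)]). Define [x,y]_β = β([x,y]). Then (g,[·,·]_β, β∘α, ε) is a color Hom-Lie algebra. -/
variable {K : Type*} [Field K] {Γ : Type*} [AddCommGroup Γ]
variable {V : Type*} [AddCommGroup V] [Module K V]

/-- `ε` is a bicharacter on the abelian group `Γ` with values in `K`. -/
def IsBicharacter (ε : Γ → Γ → K) : Prop :=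
  (∀ a b, ε a b * ε b a = 1) ∧
  (∀ a b c, ε a (b + c) = ε a b * ε a c) ∧
  (∀ a b c, ε (a + b) c = ε a c * ε b c)

/-- `(V, G, br, α)` is a color Hom-Lie algebra with bicharacter `ε`:
the bracket respects the grading `G`, `α` is even, the bracket is
`ε`-skew-symmetric on homogeneous elements, and the `ε`-Hom-Jacobi
identity holds on homogeneous elements. -/
def IsColorHomLie (ε : Γ → Γ → K) (G : Γ → Submodule K V)
    (br : V →ₗ[K] V →ₗ[K] V) (α : V →ₗ[K] V) : Prop :=
  (∀ a b, ∀ x ∈ G a, ∀ y ∈ G b, br x y ∈ G (a + b)) ∧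
  (∀ a, ∀ x ∈ G a, α x ∈ G a) ∧
  (∀ a b, ∀ x ∈ G a, ∀ y ∈ G b, br x y = -(ε a b) • br y x) ∧
  (∀ a b c, ∀ x ∈ G a, ∀ y ∈ G b, ∀ z ∈ G c,
    ε c a • br (α x) (br y z) + ε a b • br (α y) (br z x)
      + ε b c • br (α z) (br x y) = 0)

/-- Multiplicativity: `α` is a morphism for the bracket. -/
def IsMult (br : V →ₗ[K] V →ₗ[K] V) (α : V →ₗ[K] V) : Prop :=
  ∀ x y, α (br x y) = br (α x) (α y)

/-- Quadratic color Hom-Lie algebra: a color Hom-Lie algebra with a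
nondegenerate, `ε`-symmetric, invariant bilinear form `B` for which `α`
is `B`-symmetric. -/
def IsQuadColorHomLie (ε : Γ → Γ → K) (G : Γ → Submodule K V)
    (br : V →ₗ[K] V →ₗ[K] V) (α : V →ₗ[K] V)
    (B : V →ₗ[K] V →ₗ[K] K) : Prop :=
  IsColorHomLie ε G br α ∧
  (∀ x, (∀ y, B x y = 0) → x = 0) ∧
  (∀ a b, ∀ x ∈ G a, ∀ y ∈ G b, B x y = ε a b * B y x) ∧
  (∀ x y z, B (br x y) z = B x (br y z)) ∧
  (∀ x y, B (α x) y = B x (α y))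

/-- Twisting a color Hom-Lie algebra by a self weak morphism `β` (an even map
with `β[x,y] = [βx,βy]`) yields a color Hom-Lie algebra with bracket
`[x,y]_β = β[x,y]` and twist `β ∘ α`. -/
theorem stmt2 (ε : Γ → Γ → K) (hε : IsBicharacter ε)
    (G : Γ → Submodule K V) (br : V →ₗ[K] V →ₗ[K] V) (α β : V →ₗ[K] V)
    (h : IsColorHomLie ε G br α)
    (hβeven : ∀ a, ∀ x ∈ G a, β x ∈ G a)
    (hβ : ∀ x y, β (br x y) = br (β x) (β y)) :
    IsColorHomLie ε G (br.compr₂ β) (β ∘ₗ α) := by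
  obtain ⟨hgr, heven, hskew, hjac⟩ := h
  refine ⟨?_, ?_, ?_, ?_⟩
  · intro a b x hx y hy
    exact hβeven _ _ (hgr a b x hx y hy)
  · intro a x hx
    exact hβeven _ _ (heven a x hx)
  · intro a b x hx y hy
    simp only [LinearMap.compr₂_apply, hskew a b x hx y hy, map_smul]
  · intro a b c x hx y hy z hz
    have e : ∀ u v w : V, (br.compr₂ β) ((β ∘ₗ α) u) ((br.compr₂ β) v w)
        = β (β (br (α u) (br v w))) := by
      intro u v w
      simp only [LinearMap.compr₂_apply, LinearMap.comp_apply, ← hβ]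
    simp only [e]
    have hj := hjac a b c x hx y hy z hz
    calc ε c a • β (β ((br (α x)) ((br y) z))) + ε a b • β (β ((br (α y)) ((br z) x)))
        + ε b c • β (β ((br (α z)) ((br x) y)))
        = β (β (ε c a • (br (α x)) ((br y) z) + ε a b • (br (α y)) ((br z) x)
            + ε b c • (br (α z)) ((br x) y))) := by simp [map_add, map_smul]
      _ = 0 := by rw [hj]; simp
end

section
/- Let (g,[·,·],ε) be a color Lie algebra and α a color Lie algebra morphism of g. Then (g,[·,·]_α, α, ε) with [x,y]_α = α([x,y]) is a multiplicative color Hom-Lie algebra. -/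
variable {K : Type*} [Field K] {Γ : Type*} [AddCommGroup Γ]
variable {V : Type*} [AddCommGroup V] [Module K V]

/-- Twisting a color Lie algebra by a morphism `α` gives a multiplicative
color Hom-Lie algebra `(g, α∘[·,·], α)`. -/
theorem stmt3 (ε : Γ → Γ → K) (hε : IsBicharacter ε)
    (G : Γ → Submodule K V) (br : V →ₗ[K] V →ₗ[K] V) (α : V →ₗ[K] V)
    (h : IsColorHomLie ε G br (LinearMap.id : V →ₗ[K] V))
    (hαeven : ∀ a, ∀ x ∈ G a, α x ∈ G a)
    (hα : ∀ x y, α (br x y) = br (α x) (α y)) :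
    IsColorHomLie ε G (br.compr₂ α) α ∧ IsMult (br.compr₂ α) α := by
  obtain ⟨hgrad, _, hskew, hjac⟩ := h
  refine ⟨⟨?_, hαeven, ?_, ?_⟩, ?_⟩
  · intro a b x hx y hy
    exact hαeven _ _ (hgrad a b x hx y hy)
  · intro a b x hx y hy
    simp only [LinearMap.compr₂_apply, hskew a b x hx y hy, map_neg, map_smul]
  · intro a b c x hx y hy z hz
    have key := hjac a b c x hx y hy z hz
    simp only [LinearMap.id_coe, id_eq] at key
    simp only [LinearMap.compr₂_apply]
    calc ε c a • α (br (α x) (α (br y z))) + ε a b • α (br (α y) (α (br z x)))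
          + ε b c • α (br (α z) (α (br x y)))
        = α (α (ε c a • br x (br y z) + ε a b • br y (br z x) + ε b c • br z (br x y))) := by
          simp only [map_add, map_smul, hα]
      _ = 0 := by rw [key, map_zero, map_zero]
  · intro x y
    simp only [LinearMap.compr₂_apply, hα]
end

section
/- Let (g,[·,·],α,ε) be a multiplicative color Hom-Lie algebra. Then for every n ≥ 0, (g, αⁿ∘[·,·], α^{n+1}, ε) is a multiplicative color Hom-Lie algebra. -/
variable {K : Type*} [Field K] {Γ : Type*} [AddCommGroup Γ]
variable {V : Type*} [AddCommGroup V] [Module K V]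

/-- From a multiplicative color Hom-Lie algebra `(g,[·,·],α,ε)` one gets the
multiplicative color Hom-Lie algebras `(g, αⁿ∘[·,·], α^(n+1), ε)` for every `n ≥ 0`. -/
theorem stmt4 (ε : Γ → Γ → K) (hε : IsBicharacter ε)
    (G : Γ → Submodule K V) (br : V →ₗ[K] V →ₗ[K] V) (α : V →ₗ[K] V)
    (h : IsColorHomLie ε G br α) (hmult : IsMult br α) (n : ℕ) :
    IsColorHomLie ε G (br.compr₂ ((α ^ n : Module.End K V) : V →ₗ[K] V))
        ((α ^ (n + 1) : Module.End K V) : V →ₗ[K] V) ∧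
      IsMult (br.compr₂ ((α ^ n : Module.End K V) : V →ₗ[K] V))
        ((α ^ (n + 1) : Module.End K V) : V →ₗ[K] V) := by
  obtain ⟨hgr, heven, hskew, hjac⟩ := h
  -- αⁿ commutes with the bracket
  have key : ∀ m : ℕ, ∀ x y, ((α ^ m : Module.End K V) : V →ₗ[K] V) (br x y)
      = br (((α ^ m : Module.End K V) : V →ₗ[K] V) x) (((α ^ m : Module.End K V) : V →ₗ[K] V) y) := by
    intro m
    induction m with
    | zero => intro x y; simp
    | succ k ih =>
      intro x y
      have : (α ^ (k+1) : Module.End K V) = α * (α ^ k : Module.End K V) := by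
        rw [pow_succ']
      rw [this]
      simp only [Module.End.mul_apply]
      rw [ih, hmult]
  have keyG : ∀ m : ℕ, ∀ a, ∀ x ∈ G a, ((α ^ m : Module.End K V) : V →ₗ[K] V) x ∈ G a := by
    intro m
    induction m with
    | zero => intro a x hx; simpa using hx
    | succ k ih =>
      intro a x hx
      have : (α ^ (k+1) : Module.End K V) = α * (α ^ k : Module.End K V) := by
        rw [pow_succ']
      rw [this]
      exact heven a _ (ih a x hx)
  set αn := ((α ^ n : Module.End K V) : V →ₗ[K] V) with hαn
  constructor
  · refine ⟨?_, ?_, ?_, ?_⟩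
    · intro a b x hx y hy
      exact keyG n _ _ (hgr a b x hx y hy)
    · intro a x hx
      exact keyG (n+1) a x hx
    · intro a b x hx y hy
      simp only [LinearMap.compr₂_apply]
      rw [hskew a b x hx y hy]
      simp
    · intro a b c x hx y hy z hz
      simp only [LinearMap.compr₂_apply]
      have e1 : (α ^ (n+1) : Module.End K V) = α ^ n * α := pow_succ α n
      have hx' : ((α ^ (n+1) : Module.End K V) : V →ₗ[K] V) x = αn (α x) := by
        rw [e1]; rfl
      have hy' : ((α ^ (n+1) : Module.End K V) : V →ₗ[K] V) y = αn (α y) := by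
        rw [e1]; rfl
      have hz' : ((α ^ (n+1) : Module.End K V) : V →ₗ[K] V) z = αn (α z) := by
        rw [e1]; rfl
      have J := hjac a b c x hx y hy z hz
      have h0 : αn (αn (ε c a • br (α x) (br y z) + ε a b • br (α y) (br z x)
          + ε b c • br (α z) (br x y))) = 0 := by rw [J]; simp
      rw [hx', hy', hz']
      simpa only [hαn, map_add, map_smul, key n] using h0
  · intro x y
    simp only [LinearMap.compr₂_apply]
    have e1 : (α ^ (n+1) : Module.End K V) = α ^ n * α := pow_succ α n
    calc ((α ^ (n+1) : Module.End K V) : V →ₗ[K] V) (αn (br x y))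
        = αn (((α ^ (n+1) : Module.End K V) : V →ₗ[K] V) (br x y)) := by
          rw [hαn]
          rw [show ((α ^ (n+1) : Module.End K V) : V →ₗ[K] V)
              (((α ^ n : Module.End K V) : V →ₗ[K] V) (br x y))
              = ((α ^ (n+1) * α ^ n : Module.End K V) : V →ₗ[K] V) (br x y) from rfl,
            show ((α ^ n : Module.End K V) : V →ₗ[K] V)
              (((α ^ (n+1) : Module.End K V) : V →ₗ[K] V) (br x y))
              = ((α ^ n * α ^ (n+1) : Module.End K V) : V →ₗ[K] V) (br x y) from rfl,
            ← pow_add, ← pow_add, add_comm]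
      _ = αn (br (((α ^ (n+1) : Module.End K V) : V →ₗ[K] V) x)
            (((α ^ (n+1) : Module.End K V) : V →ₗ[K] V) y)) := by rw [key (n+1)]
end

section
/- Let (g,[·,·],α,ε,B) be a quadratic color Hom-Lie algebra and β a symmetric automorphism of (g,B), i.e., an automorphism of the color Hom-Lie algebra with β∘α = α∘β and B(β(x),y) = B(x,β(y)). Define [x,y]_β = β([x,y]) and B_β(x,y) = B(β(x),y). Then (g,[·,·]_β, β∘α, ε, B_β) is a quadratic color Hom-Lie algebra. -/
variable {K : Type*} [Field K] {Γ : Type*} [AddCommGroup Γ]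
variable {V : Type*} [AddCommGroup V] [Module K V]

/-- Twisting a quadratic color Hom-Lie algebra by a symmetric automorphism `β`
yields a quadratic color Hom-Lie algebra `(g, β∘[·,·], β∘α, ε, B(β·,·))`. -/
theorem stmt5 (ε : Γ → Γ → K) (hε : IsBicharacter ε)
    (G : Γ → Submodule K V) (br : V →ₗ[K] V →ₗ[K] V) (α β : V →ₗ[K] V)
    (B : V →ₗ[K] V →ₗ[K] K)
    (h : IsQuadColorHomLie ε G br α B)
    (hβbij : Function.Bijective β)
    (hβeven : ∀ a, ∀ x ∈ G a, β x ∈ G a)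
    (hβbr : ∀ x y, β (br x y) = br (β x) (β y))
    (hβα : ∀ x, β (α x) = α (β x))
    (hβB : ∀ x y, B (β x) y = B x (β y)) :
    IsQuadColorHomLie ε G (br.compr₂ β) (β ∘ₗ α) (B ∘ₗ β) := by

  obtain ⟨⟨hgrad, hαeven, hskew, hjac⟩, hnd, hsym, hinv, hαB⟩ := h
  refine ⟨⟨?_, ?_, ?_, ?_⟩, ?_, ?_, ?_, ?_⟩
  · intro a b x hx y hy
    exact hβeven _ _ (hgrad a b x hx y hy)
  · intro a x hx
    exact hβeven _ _ (hαeven a x hx)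
  · intro a b x hx y hy
    simp only [LinearMap.compr₂_apply, hskew a b x hx y hy, map_smul]
  · intro a b c x hx y hy z hz
    have e : ∀ u v w : V, (br.compr₂ β) ((β ∘ₗ α) u) ((br.compr₂ β) v w)
        = β (β (br (α u) (br v w))) := by
      intro u v w
      simp only [LinearMap.compr₂_apply, LinearMap.comp_apply, hβbr, hβα]
    have key : ε c a • β (β (br (α x) (br y z))) + ε a b • β (β (br (α y) (br z x)))
        + ε b c • β (β (br (α z) (br x y)))
        = β (β (ε c a • br (α x) (br y z) + ε a b • br (α y) (br z x)
            + ε b c • br (α z) (br x y))) := by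
      simp [map_add, map_smul]
    rw [e, e, e, key, hjac a b c x hx y hy z hz, map_zero, map_zero]
  · intro x hx
    have : β x = 0 := hnd _ fun y => hx y
    exact hβbij.injective (by simpa using this)
  · intro a b x hx y hy
    simp only [LinearMap.comp_apply]
    rw [hsym a b (β x) (hβeven a x hx) y hy, ← hβB]
  · intro x y z
    simp only [LinearMap.comp_apply, LinearMap.compr₂_apply]
    rw [hβB, hβbr, hinv, ← hβbr]
  · intro x y
    simp only [LinearMap.comp_apply]
    rw [hβB, hβB, hαB, ← hβα, ← hβB, hβα]
end

section
/- Let (g,[·,·],α,ε) be a color Hom-Lie algebra and θ an even element of the centroid of g. Then (g,[·,·], θ∘α, ε) is a color Hom-Lie algebra. -/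
variable {K : Type*} [Field K] {Γ : Type*} [AddCommGroup Γ]
variable {V : Type*} [AddCommGroup V] [Module K V]

/-- If `θ` is an even element of the centroid of a color Hom-Lie algebra
`(g,[·,·],α,ε)`, then `(g,[·,·],θ∘α,ε)` is a color Hom-Lie algebra. -/
theorem stmt6 (ε : Γ → Γ → K) (hε : IsBicharacter ε)
    (G : Γ → Submodule K V) (br : V →ₗ[K] V →ₗ[K] V) (α θ : V →ₗ[K] V)
    (h : IsColorHomLie ε G br α)
    (hθeven : ∀ a, ∀ x ∈ G a, θ x ∈ G a)
    (hθ₁ : ∀ x y, θ (br x y) = br (θ x) y)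
    (hθ₂ : ∀ x y, θ (br x y) = br x (θ y)) :
    IsColorHomLie ε G br (θ ∘ₗ α) := by
  obtain ⟨hgr, heven, hskew, hjac⟩ := h
  refine ⟨hgr, ?_, hskew, ?_⟩
  · intro a x hx
    exact hθeven a _ (heven a x hx)
  · intro a b c x hx y hy z hz
    have key := hjac a b c x hx y hy z hz
    have := congrArg θ key
    simpa [hθ₁, map_smul] using this
end

section
/- Let (g,[·,·],α,ε) be a color Hom-Lie algebra and θ an even element of the centroid of g. Define [x,y]₁^θ = [θ(x),y] and [x,y]₂^θ = [θ(x),θ(y)]. Then (g,[·,·]₁^θ, θ∘α, ε) and (g,[·,·]₂^θ, θ∘α, ε) are color Hom-Lie algebras. -/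
variable {K : Type*} [Field K] {Γ : Type*} [AddCommGroup Γ]
variable {V : Type*} [AddCommGroup V] [Module K V]

/-- If `θ` is an even element of the centroid of a color Hom-Lie algebra, then
`(g, [θ·,·], θ∘α, ε)` and `(g, [θ·,θ·], θ∘α, ε)` are color Hom-Lie algebras. -/
theorem stmt7 (ε : Γ → Γ → K) (hε : IsBicharacter ε)
    (G : Γ → Submodule K V) (br : V →ₗ[K] V →ₗ[K] V) (α θ : V →ₗ[K] V)
    (h : IsColorHomLie ε G br α)
    (hθeven : ∀ a, ∀ x ∈ G a, θ x ∈ G a)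
    (hθ₁ : ∀ x y, θ (br x y) = br (θ x) y)
    (hθ₂ : ∀ x y, θ (br x y) = br x (θ y)) :
    IsColorHomLie ε G (br ∘ₗ θ) (θ ∘ₗ α) ∧
      IsColorHomLie ε G ((br ∘ₗ θ).compl₂ θ) (θ ∘ₗ α) := by
  obtain ⟨hg, hα, hskew, hjac⟩ := h
  have key : ∀ u v, θ (θ (br u v)) = br (θ u) (θ v) := fun u v => by
    rw [hθ₂ u v, hθ₁ u (θ v)]
  have L3 : ∀ u v w, θ (θ (θ (br u (br v w)))) = br (θ (θ u)) (br (θ v) w) :=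
    fun u v w => by
      rw [hθ₂ u (br v w), hθ₁ v w, hθ₁ u (br (θ v) w), hθ₁ (θ u) (br (θ v) w)]
  have L5 : ∀ u v w,
      θ (θ (θ (θ (θ (br u (br v w)))))) = br (θ (θ u)) (θ (br (θ v) (θ w))) :=
    fun u v w => by
      rw [hθ₂ u (br v w), hθ₂ u (θ (br v w)), key v w, hθ₂ u (br (θ v) (θ w)),
        hθ₁ u (θ (br (θ v) (θ w))), hθ₁ (θ u) (θ (br (θ v) (θ w)))]
  constructor
  · refine ⟨?_, ?_, ?_, ?_⟩
    · intro a b x hx y hy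
      simpa using hg a b _ (hθeven a x hx) y hy
    · intro a x hx
      exact hθeven a _ (hα a x hx)
    · intro a b x hx y hy
      have := congrArg θ (hskew a b x hx y hy)
      rw [map_smul, hθ₁, hθ₁] at this
      simpa using this
    · intro a b c x hx y hy z hz
      simp only [LinearMap.comp_apply]
      calc ε c a • br (θ (θ (α x))) (br (θ y) z)
            + ε a b • br (θ (θ (α y))) (br (θ z) x)
            + ε b c • br (θ (θ (α z))) (br (θ x) y)
          = θ (θ (θ (ε c a • br (α x) (br y z) + ε a b • br (α y) (br z x)
              + ε b c • br (α z) (br x y)))) := by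
            simp only [map_add, map_smul, L3]
        _ = 0 := by
            rw [hjac a b c x hx y hy z hz, map_zero, map_zero, map_zero]
  · refine ⟨?_, ?_, ?_, ?_⟩
    · intro a b x hx y hy
      simpa using hg a b _ (hθeven a x hx) _ (hθeven b y hy)
    · intro a x hx
      exact hθeven a _ (hα a x hx)
    · intro a b x hx y hy
      simp only [LinearMap.compl₂_apply, LinearMap.comp_apply, ← key]
      rw [hskew a b x hx y hy]
      simp
    · intro a b c x hx y hy z hz
      simp only [LinearMap.compl₂_apply, LinearMap.comp_apply]
      calc ε c a • br (θ (θ (α x))) (θ (br (θ y) (θ z)))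
            + ε a b • br (θ (θ (α y))) (θ (br (θ z) (θ x)))
            + ε b c • br (θ (θ (α z))) (θ (br (θ x) (θ y)))
          = θ (θ (θ (θ (θ (ε c a • br (α x) (br y z) + ε a b • br (α y) (br z x)
              + ε b c • br (α z) (br x y)))))) := by
            simp only [map_add, map_smul, L5]
        _ = 0 := by
            rw [hjac a b c x hx y hy z hz]
            simp
end

section
/- Let (g,[·,·],α,ε) be a color Hom-Lie algebra and θ an even element of the centroid of g. Then (g,[·,·], α∘θ, ε) is a color Hom-Lie algebra. -/
variable {K : Type*} [Field K] {Γ : Type*} [AddCommGroup Γ]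
variable {V : Type*} [AddCommGroup V] [Module K V]

/-- If `θ` is an even element of the centroid of a color Hom-Lie algebra
`(g,[·,·],α,ε)`, then `(g,[·,·],α∘θ,ε)` is a color Hom-Lie algebra. -/
theorem stmt8 (ε : Γ → Γ → K) (hε : IsBicharacter ε)
    (G : Γ → Submodule K V) (br : V →ₗ[K] V →ₗ[K] V) (α θ : V →ₗ[K] V)
    (h : IsColorHomLie ε G br α)
    (hθeven : ∀ a, ∀ x ∈ G a, θ x ∈ G a)
    (hθ₁ : ∀ x y, θ (br x y) = br (θ x) y)
    (hθ₂ : ∀ x y, θ (br x y) = br x (θ y)) :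
    IsColorHomLie ε G br (α ∘ₗ θ) := by
  obtain ⟨hgr, hev, hskew, hJ⟩ := h
  refine ⟨hgr, fun a x hx => hev a (θ x) (hθeven a x hx), hskew, ?_⟩
  intro a b c x hx y hy z hz
  have J1 := hJ a b c (θ x) (hθeven a x hx) y hy z hz
  have J2 := hJ a b c x hx (θ y) (hθeven b y hy) z hz
  have J3 := hJ a b c x hx y hy (θ z) (hθeven c z hz)
  have J0 := hJ a b c x hx y hy z hz
  have E := congrArg θ J0
  simp only [map_add, map_smul, map_zero, hθ₂] at E
  rw [← hθ₂ z x, ← hθ₁ x y] at J1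
  rw [← hθ₁ y z, ← hθ₂ x y] at J2
  rw [← hθ₂ y z, ← hθ₁ z x] at J3
  simp only [LinearMap.comp_apply]
  have goal_eq : ε c a • br (α (θ x)) (br y z) + ε a b • br (α (θ y)) (br z x)
      + ε b c • br (α (θ z)) (br x y)
    = (ε c a • br (α (θ x)) (br y z) + ε a b • br (α y) (θ (br z x))
        + ε b c • br (α z) (θ (br x y)))
      + (ε c a • br (α x) (θ (br y z)) + ε a b • br (α (θ y)) (br z x)
        + ε b c • br (α z) (θ (br x y)))
      + (ε c a • br (α x) (θ (br y z)) + ε a b • br (α y) (θ (br z x))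
        + ε b c • br (α (θ z)) (br x y))
      - (2:K) • (ε c a • br (α x) (θ (br y z)) + ε a b • br (α y) (θ (br z x))
        + ε b c • br (α z) (θ (br x y))) := by module
  rw [goal_eq, J1, J2, J3]
  simp only [hθ₂, E]
  simp
end

section
/- Let (g,[·,·],ε,B) be a quadratic color Lie algebra and θ an invertible, B-symmetric, even element of the centroid of g. Then (g,[·,·]₁^θ, θ, ε, B_θ) and (g,[·,·]₂^θ, θ, ε, B_θ) are quadratic color Hom-Lie algebras, where [x,y]₁^θ = [θ(x),y], [x,y]₂^θ = [θ(x),θ(y)], and B_θ(x,y) = B(θ(x),y). -/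
variable {K : Type*} [Field K] {Γ : Type*} [AddCommGroup Γ]
variable {V : Type*} [AddCommGroup V] [Module K V]

/-- If `θ` is an invertible, `B`-symmetric, even element of the centroid of a
quadratic color Lie algebra `(g,[·,·],ε,B)`, then `(g,[θ·,·],θ,ε,B(θ·,·))` and
`(g,[θ·,θ·],θ,ε,B(θ·,·))` are quadratic color Hom-Lie algebras. -/
theorem stmt9 (ε : Γ → Γ → K) (hε : IsBicharacter ε)
    (G : Γ → Submodule K V) (br : V →ₗ[K] V →ₗ[K] V) (θ : V →ₗ[K] V)
    (B : V →ₗ[K] V →ₗ[K] K)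
    (h : IsQuadColorHomLie ε G br (LinearMap.id : V →ₗ[K] V) B)
    (hθbij : Function.Bijective θ)
    (hθeven : ∀ a, ∀ x ∈ G a, θ x ∈ G a)
    (hθ₁ : ∀ x y, θ (br x y) = br (θ x) y)
    (hθ₂ : ∀ x y, θ (br x y) = br x (θ y))
    (hθB : ∀ x y, B (θ x) y = B x (θ y)) :
    IsQuadColorHomLie ε G (br ∘ₗ θ) θ (B ∘ₗ θ) ∧
      IsQuadColorHomLie ε G ((br ∘ₗ θ).compl₂ θ) θ (B ∘ₗ θ) := by
  obtain ⟨⟨hgr, -, hskew, hjac⟩, hnd, hsym, hinv, -⟩ := h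
  simp only [LinearMap.id_coe, id_eq] at hjac
  have m1 : ∀ x y, br (θ x) y = θ (br x y) := fun x y => (hθ₁ x y).symm
  have m2 : ∀ x y, br x (θ y) = θ (br x y) := fun x y => (hθ₂ x y).symm
  have hnd' : ∀ x : V, (∀ y, (B ∘ₗ θ) x y = 0) → x = 0 := by
    intro x hx
    have h0 : θ x = 0 := hnd (θ x) (fun y => hx y)
    exact hθbij.injective (by simpa using h0)
  have hsym' : ∀ a b, ∀ x ∈ G a, ∀ y ∈ G b,
      (B ∘ₗ θ) x y = ε a b * (B ∘ₗ θ) y x := by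
    intro a b x hx y hy
    simp only [LinearMap.comp_apply]
    rw [hsym a b (θ x) (hθeven a x hx) y hy, hθB]
  have hBsym' : ∀ x y : V, (B ∘ₗ θ) (θ x) y = (B ∘ₗ θ) x (θ y) := by
    intro x y; simp only [LinearMap.comp_apply, hθB]
  constructor
  · refine ⟨⟨?_, hθeven, ?_, ?_⟩, hnd', hsym', ?_, hBsym'⟩
    · intro a b x hx y hy
      exact hgr a b (θ x) (hθeven a x hx) y hy
    · intro a b x hx y hy
      simp only [LinearMap.comp_apply]
      rw [hskew a b (θ x) (hθeven a x hx) y hy, m2, hθ₁]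
    · intro a b c x hx y hy z hz
      have hj := hjac a b c x hx y hy z hz
      have h3 := congrArg (fun w => θ (θ (θ w))) hj
      simp only [map_add, map_smul, map_zero] at h3
      simp only [LinearMap.comp_apply, m1, m2]
      simpa [m1, m2] using h3
    · intro x y z
      simp only [LinearMap.comp_apply]
      rw [hθ₂, hinv]
  · refine ⟨⟨?_, hθeven, ?_, ?_⟩, hnd', hsym', ?_, hBsym'⟩
    · intro a b x hx y hy
      exact hgr a b (θ x) (hθeven a x hx) (θ y) (hθeven b y hy)
    · intro a b x hx y hy
      simpa using hskew a b (θ x) (hθeven a x hx) (θ y) (hθeven b y hy)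
    · intro a b c x hx y hy z hz
      have hj := hjac a b c x hx y hy z hz
      have h5 := congrArg (fun w => θ (θ (θ (θ (θ w))))) hj
      simp only [map_add, map_smul, map_zero] at h5
      simp only [LinearMap.compl₂_apply, LinearMap.comp_apply, m1, m2]
      simpa [m1, m2] using h5
    · intro x y z
      simp only [LinearMap.compl₂_apply, LinearMap.comp_apply]
      rw [hθ₂, hinv, m1, hθ₂]
end

section
/- Let (A,μ,α,ε,B) be a quadratic color Hom-associative algebra. Define the color commutator [x,y] = μ(x,y) − ε(x,y)μ(y,x) on homogeneous elements. Then (A,[·,·],α,ε,B) is a quadratic color Hom-Lie algebra; in particular B is invariant for the commutator bracket: B([x,y],z) = B(x,[y,z]). -/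
/- Expanding the commutators, Hom-associativity makes the twelve terms of the Hom-Jacobi sum cancel
in pairs, and invariance of `B` for `μ` together with `ε`-symmetry moves each half of the
commutator across `B`; in both computations the scalars match because `ε a b * ε b a = 1`.
A general triple is then handled by trilinearity, since the homogeneous components span. -/

variable {K : Type*} [Field K] {Γ : Type*} [AddCommGroup Γ]
variable {V : Type*} [AddCommGroup V] [Module K V]

section SpanningFamily

variable {R M N ι : Type*} [CommSemiring R] [AddCommMonoid M] [Module R M]
  [AddCommMonoid N] [Module R N] {G : ι → Submodule R M}

theorem LinearMap.ext_of_iSup_eq_top (hG : ⨆ i, G i = ⊤) {f g : M →ₗ[R] N}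
    (h : ∀ i, ∀ x ∈ G i, f x = g x) : f = g :=
  LinearMap.ext_on (s := ⋃ i, (G i : Set M)) (by rw [← Submodule.iSup_eq_span, hG])
    (fun x hx => by obtain ⟨i, hi⟩ := Set.mem_iUnion.mp hx; exact h i x hi)

theorem LinearMap.ext₃_of_iSup_eq_top (hG : ⨆ i, G i = ⊤) {f g : M →ₗ[R] M →ₗ[R] M →ₗ[R] N}
    (h : ∀ i j k, ∀ x ∈ G i, ∀ y ∈ G j, ∀ z ∈ G k, f x y z = g x y z) : f = g :=
  LinearMap.ext_of_iSup_eq_top hG fun i x hx =>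
    LinearMap.ext_of_iSup_eq_top hG fun j y hy =>
      LinearMap.ext_of_iSup_eq_top hG fun k z hz => h i j k x hx y hy z hz

end SpanningFamily

section ColorCommutator

variable {ε : Γ → Γ → K} {G : Γ → Submodule K V} {μ br : V →ₗ[K] V →ₗ[K] V}

theorem colorCommutator_mem (hμgr : ∀ a b, ∀ x ∈ G a, ∀ y ∈ G b, μ x y ∈ G (a + b))
    (hbr : ∀ a b, ∀ x ∈ G a, ∀ y ∈ G b, br x y = μ x y - ε a b • μ y x)
    {a b : Γ} {x y : V} (hx : x ∈ G a) (hy : y ∈ G b) : br x y ∈ G (a + b) := by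
  rw [hbr a b x hx y hy]
  exact sub_mem (hμgr a b x hx y hy)
    (Submodule.smul_mem _ _ (add_comm b a ▸ hμgr b a y hy x hx))

theorem colorCommutator_skew (hε : IsBicharacter ε)
    (hbr : ∀ a b, ∀ x ∈ G a, ∀ y ∈ G b, br x y = μ x y - ε a b • μ y x)
    {a b : Γ} {x y : V} (hx : x ∈ G a) (hy : y ∈ G b) : br x y = -(ε a b) • br y x := by
  rw [hbr a b x hx y hy, hbr b a y hy x hx]
  match_scalars
  · linear_combination -hε.1 a b
  · ring

theorem colorCommutator_homJacobi (hε : IsBicharacter ε) {α : V →ₗ[K] V}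
    (hμgr : ∀ a b, ∀ x ∈ G a, ∀ y ∈ G b, μ x y ∈ G (a + b))
    (hαeven : ∀ a, ∀ x ∈ G a, α x ∈ G a)
    (hassoc : ∀ x y z, μ (α x) (μ y z) = μ (μ x y) (α z))
    (hbr : ∀ a b, ∀ x ∈ G a, ∀ y ∈ G b, br x y = μ x y - ε a b • μ y x)
    {a b c : Γ} {x y z : V} (hx : x ∈ G a) (hy : y ∈ G b) (hz : z ∈ G c) :
    ε c a • br (α x) (br y z) + ε a b • br (α y) (br z x) + ε b c • br (α z) (br x y) = 0 := by
  obtain ⟨hεswap, hεadd, -⟩ := hε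
  rw [hbr a (b + c) (α x) (hαeven a x hx) (br y z) (colorCommutator_mem hμgr hbr hy hz),
    hbr b (c + a) (α y) (hαeven b y hy) (br z x) (colorCommutator_mem hμgr hbr hz hx),
    hbr c (a + b) (α z) (hαeven c z hz) (br x y) (colorCommutator_mem hμgr hbr hx hy),
    hbr b c y hy z hz, hbr c a z hz x hx, hbr a b x hx y hy]
  simp only [map_sub, map_smul, LinearMap.sub_apply, LinearMap.smul_apply, hεadd, hassoc]
  match_scalars
  · linear_combination -ε c a * hεswap b c
  · linear_combination ε b c * ε c a * hεswap a b
  · linear_combination -ε a b * hεswap c a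
  · linear_combination ε a b * ε b c * hεswap c a
  · linear_combination ε a b * ε c a * hεswap b c
  · linear_combination -ε b c * hεswap a b

theorem colorCommutator_invariant_of_mem (hε : IsBicharacter ε) {B : V →ₗ[K] V →ₗ[K] K}
    (hμgr : ∀ a b, ∀ x ∈ G a, ∀ y ∈ G b, μ x y ∈ G (a + b))
    (hBsym : ∀ a b, ∀ x ∈ G a, ∀ y ∈ G b, B x y = ε a b * B y x)
    (hBinv : ∀ x y z, B (μ x y) z = B x (μ y z))
    (hbr : ∀ a b, ∀ x ∈ G a, ∀ y ∈ G b, br x y = μ x y - ε a b • μ y x)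
    {a b c : Γ} {x y z : V} (hx : x ∈ G a) (hy : y ∈ G b) (hz : z ∈ G c) :
    B (br x y) z = B x (br y z) := by
  rw [hbr a b x hx y hy, hbr b c y hy z hz]
  simp only [map_sub, map_smul, LinearMap.sub_apply, LinearMap.smul_apply, smul_eq_mul]
  have hyxz : B y (μ x z) = ε b a * ε b c * B x (μ z y) := by
    rw [hBsym b (a + c) y hy _ (hμgr a c x hx z hz), hε.2.1, hBinv]
  rw [hBinv x y z, hBinv y x z, hyxz]
  linear_combination -ε b c * B x (μ z y) * hε.1 a b

theorem colorCommutator_invariant (hε : IsBicharacter ε) {B : V →ₗ[K] V →ₗ[K] K}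
    (hspan : (⨆ a, G a) = (⊤ : Submodule K V))
    (hμgr : ∀ a b, ∀ x ∈ G a, ∀ y ∈ G b, μ x y ∈ G (a + b))
    (hBsym : ∀ a b, ∀ x ∈ G a, ∀ y ∈ G b, B x y = ε a b * B y x)
    (hBinv : ∀ x y z, B (μ x y) z = B x (μ y z))
    (hbr : ∀ a b, ∀ x ∈ G a, ∀ y ∈ G b, br x y = μ x y - ε a b • μ y x)
    (x y z : V) : B (br x y) z = B x (br y z) := by
  -- the right-hand side, `x y z ↦ B x (br y z)`, as a trilinear map
  have htrilinear : br.compr₂ B = ((LinearMap.llcomp K V V K) ∘ₗ B).compl₂ br :=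
    LinearMap.ext₃_of_iSup_eq_top hspan fun a b c x hx y hy z hz =>
      colorCommutator_invariant_of_mem hε hμgr hBsym hBinv hbr hx hy hz
  exact congr($htrilinear x y z)

end ColorCommutator

/-- The color commutator `[x,y] = μ(x,y) − ε(x,y)μ(y,x)` of a quadratic color
Hom-associative algebra `(A,μ,α,ε,B)` makes it a quadratic color Hom-Lie
algebra; in particular `B` is invariant for the commutator bracket. -/
theorem stmt10 (ε : Γ → Γ → K) (hε : IsBicharacter ε)
    (G : Γ → Submodule K V) (μ : V →ₗ[K] V →ₗ[K] V) (α : V →ₗ[K] V)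
    (B : V →ₗ[K] V →ₗ[K] K)
    (hspan : (⨆ a, G a) = (⊤ : Submodule K V))
    (hμgr : ∀ a b, ∀ x ∈ G a, ∀ y ∈ G b, μ x y ∈ G (a + b))
    (hαeven : ∀ a, ∀ x ∈ G a, α x ∈ G a)
    (hassoc : ∀ x y z, μ (α x) (μ y z) = μ (μ x y) (α z))
    (hBnd : ∀ x, (∀ y, B x y = 0) → x = 0)
    (hBsym : ∀ a b, ∀ x ∈ G a, ∀ y ∈ G b, B x y = ε a b * B y x)
    (hBinv : ∀ x y z, B (μ x y) z = B x (μ y z))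
    (hBα : ∀ x y, B (α x) y = B x (α y))
    (br : V →ₗ[K] V →ₗ[K] V)
    (hbr : ∀ a b, ∀ x ∈ G a, ∀ y ∈ G b, br x y = μ x y - ε a b • μ y x) :
    IsQuadColorHomLie ε G br α B :=
  ⟨⟨fun _ _ _ hx _ hy => colorCommutator_mem hμgr hbr hx hy, hαeven,
      fun _ _ _ hx _ hy => colorCommutator_skew hε hbr hx hy,
      fun _ _ _ _ hx _ hy _ hz => colorCommutator_homJacobi hε hμgr hαeven hassoc hbr hx hy hz⟩,
    hBnd, hBsym, colorCommutator_invariant hε hspan hμgr hBsym hBinv hbr, hBα⟩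
end

section
/- Let (A,μ,α_A,ε) be a commutative color Hom-associative algebra and (g,[·,·]_g, α_g, ε) a color Hom-Lie algebra. Then g⊗A with bracket [x⊗a, y⊗b] = ε(a,y)[x,y]_g ⊗ μ(a,b) and twist α(x⊗a) = α_g(x)⊗α_A(a) is a color Hom-Lie algebra. -/
variable {K : Type*} [Field K] {Γ : Type*} [AddCommGroup Γ]
variable {V : Type*} [AddCommGroup V] [Module K V]

open scoped TensorProduct

variable {A : Type*} [AddCommGroup A] [Module K A]

theorem span_ind_mem' {M N : Type*} [AddCommGroup M] [Module K M] [AddCommGroup N] [Module K N]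
    {s : Set M} (f : M →ₗ[K] N) (Q : Submodule K N)
    (h : ∀ x ∈ s, f x ∈ Q) :
    ∀ x ∈ Submodule.span K s, f x ∈ Q := by
  intro x hx
  induction hx using Submodule.span_induction with
  | mem x hxs => exact h x hxs
  | zero => simp
  | add x z _ _ h1 h2 => simpa using Q.add_mem h1 h2
  | smul c x _ h1 => simpa using Q.smul_mem c h1

theorem span_ind_eq0 {M N : Type*} [AddCommGroup M] [Module K M] [AddCommGroup N] [Module K N]
    {s : Set M} (f : M →ₗ[K] N)
    (h : ∀ x ∈ s, f x = 0) :
    ∀ x ∈ Submodule.span K s, f x = 0 := by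
  intro x hx
  have := span_ind_mem' f ⊥ (by simpa using h) x hx
  simpa using this

theorem three_smul_zero {N : Type*} [AddCommGroup N] [Module K N]
    (T₁ T₂ T₃ : N) (l p q r : K) (h : p • T₁ + q • T₂ + r • T₃ = 0) :
    (l * p) • T₁ + (l * q) • T₂ + (l * r) • T₃ = 0 := by
  rw [mul_smul, mul_smul, mul_smul, ← smul_add, ← smul_add, h, smul_zero]

/-- The tensor product of a commutative color Hom-associative algebra `A` and a
color Hom-Lie algebra `g`, with bracket `[x⊗a, y⊗b] = ε(a,y)[x,y]⊗μ(a,b)` and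
twist `α_g ⊗ α_A`, is a color Hom-Lie algebra. -/
theorem stmt11 (ε : Γ → Γ → K) (hε : IsBicharacter ε)
    (Gg : Γ → Submodule K V) (br : V →ₗ[K] V →ₗ[K] V) (αg : V →ₗ[K] V)
    (hg : IsColorHomLie ε Gg br αg)
    (GA : Γ → Submodule K A) (μ : A →ₗ[K] A →ₗ[K] A) (αA : A →ₗ[K] A)
    (hμgr : ∀ a b, ∀ u ∈ GA a, ∀ v ∈ GA b, μ u v ∈ GA (a + b))
    (hαA : ∀ a, ∀ u ∈ GA a, αA u ∈ GA a)
    (hassoc : ∀ u v w, μ (αA u) (μ v w) = μ (μ u v) (αA w))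
    (hcomm : ∀ a b, ∀ u ∈ GA a, ∀ v ∈ GA b, μ u v = ε a b • μ v u)
    (brT : (V ⊗[K] A) →ₗ[K] (V ⊗[K] A) →ₗ[K] (V ⊗[K] A))
    (hbrT : ∀ a b c d : Γ, ∀ x ∈ Gg a, ∀ u ∈ GA b, ∀ y ∈ Gg c, ∀ v ∈ GA d,
      brT (x ⊗ₜ[K] u) (y ⊗ₜ[K] v) = ε b c • (br x y ⊗ₜ[K] μ u v)) :
    IsColorHomLie ε
      (fun δ => Submodule.span K
        {t : V ⊗[K] A | ∃ a b, a + b = δ ∧ ∃ x ∈ Gg a, ∃ u ∈ GA b, t = x ⊗ₜ[K] u})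
      brT (TensorProduct.map αg αA) := by
  obtain ⟨hεinv, hεadd₁, hεadd₂⟩ := hε
  obtain ⟨hgr, hα, hskew, hjac⟩ := hg
  set S : Γ → Set (V ⊗[K] A) := fun δ =>
    {t : V ⊗[K] A | ∃ a b, a + b = δ ∧ ∃ x ∈ Gg a, ∃ u ∈ GA b, t = x ⊗ₜ[K] u} with hS
  refine ⟨?_, ?_, ?_, ?_⟩
  · -- grading
    intro a b t ht s hs
    refine span_ind_mem' (brT.flip s) _ (fun t' ht' => ?_) t ht
    obtain ⟨a₁, a₂, rfl, x, hx, u, hu, rfl⟩ := ht'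
    -- now induct on s
    have : brT (x ⊗ₜ[K] u) s ∈ Submodule.span K (S (a₁ + a₂ + b)) := by
      refine span_ind_mem' (brT (x ⊗ₜ[K] u)) _ (fun s' hs' => ?_) s hs
      obtain ⟨b₁, b₂, rfl, y, hy, v, hv, rfl⟩ := hs'
      rw [hbrT a₁ a₂ b₁ b₂ x hx u hu y hy v hv]
      refine Submodule.smul_mem _ _ (Submodule.subset_span ?_)
      exact ⟨a₁ + b₁, a₂ + b₂, by abel, br x y, hgr _ _ x hx y hy,
        μ u v, hμgr _ _ u hu v hv, rfl⟩
    simpa using this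
  · -- α even
    intro a t ht
    refine span_ind_mem' (TensorProduct.map αg αA) _ (fun t' ht' => ?_) t ht
    obtain ⟨a₁, a₂, rfl, x, hx, u, hu, rfl⟩ := ht'
    rw [TensorProduct.map_tmul]
    exact Submodule.subset_span ⟨a₁, a₂, rfl, αg x, hα _ x hx, αA u, hαA _ u hu, rfl⟩
  · -- skew
    intro a b t ht s hs
    suffices h : (brT.flip s + (ε a b) • brT s) t = 0 by
      simp only [LinearMap.add_apply, LinearMap.smul_apply, LinearMap.flip_apply] at h
      rw [neg_smul]
      exact eq_neg_of_add_eq_zero_left h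
    refine span_ind_eq0 _ (fun t' ht' => ?_) t ht
    obtain ⟨a₁, a₂, ha, x, hx, u, hu, rfl⟩ := ht'
    suffices h : (brT (x ⊗ₜ[K] u) + (ε a b) • brT.flip (x ⊗ₜ[K] u)) s = 0 by
      simpa using h
    refine span_ind_eq0 _ (fun s' hs' => ?_) s hs
    obtain ⟨b₁, b₂, hb, y, hy, v, hv, rfl⟩ := hs'
    subst ha hb
    simp only [LinearMap.add_apply, LinearMap.smul_apply, LinearMap.flip_apply]
    rw [hbrT a₁ a₂ b₁ b₂ x hx u hu y hy v hv,
      hbrT b₁ b₂ a₁ a₂ y hy v hv x hx u hu,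
      hskew a₁ b₁ x hx y hy, hcomm a₂ b₂ u hu v hv]
    simp only [TensorProduct.tmul_smul, ← TensorProduct.smul_tmul', smul_smul,
      neg_smul, smul_neg, neg_neg]
    simp only [TensorProduct.neg_tmul, smul_neg, ← TensorProduct.smul_tmul', smul_smul]
    rw [neg_add_eq_zero]
    congr 1
    simp only [hεadd₁, hεadd₂]
    linear_combination (-(ε a₂ b₁ * ε a₂ b₂ * ε a₁ b₁)) * hεinv a₁ b₂
  · -- Jacobi
    intro a b c t ht s hs r hr
    suffices h : (ε c a • ((brT.flip (brT s r)).comp (TensorProduct.map αg αA))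
        + ε a b • ((brT ((TensorProduct.map αg αA) s)).comp (brT r))
        + ε b c • ((brT ((TensorProduct.map αg αA) r)).comp (brT.flip s))) t = 0 by
      simpa using h
    refine span_ind_eq0 _ (fun t' ht' => ?_) t ht
    obtain ⟨a₁, a₂, ha, x, hx, u, hu, rfl⟩ := ht'
    suffices h : (ε c a • ((brT ((TensorProduct.map αg αA) (x ⊗ₜ[K] u))).comp (brT.flip r))
        + ε a b • ((brT.flip (brT r (x ⊗ₜ[K] u))).comp (TensorProduct.map αg αA))
        + ε b c • ((brT ((TensorProduct.map αg αA) r)).comp (brT (x ⊗ₜ[K] u)))) s = 0 by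
      simpa using h
    refine span_ind_eq0 _ (fun s' hs' => ?_) s hs
    obtain ⟨b₁, b₂, hb, y, hy, v, hv, rfl⟩ := hs'
    suffices h : (ε c a • ((brT ((TensorProduct.map αg αA) (x ⊗ₜ[K] u))).comp (brT (y ⊗ₜ[K] v)))
        + ε a b • ((brT ((TensorProduct.map αg αA) (y ⊗ₜ[K] v))).comp (brT.flip (x ⊗ₜ[K] u)))
        + ε b c • ((brT.flip (brT (x ⊗ₜ[K] u) (y ⊗ₜ[K] v))).comp (TensorProduct.map αg αA))) r = 0 by
      simpa using h
    refine span_ind_eq0 _ (fun r' hr' => ?_) r hr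
    obtain ⟨c₁, c₂, hc, z, hz, w, hw, rfl⟩ := hr'
    subst ha hb hc
    simp only [LinearMap.add_apply, LinearMap.smul_apply, LinearMap.comp_apply,
      LinearMap.flip_apply, TensorProduct.map_tmul]
    have m2 : μ (αA v) (μ w u) = ε (b₂ + c₂) a₂ • μ (αA u) (μ v w) := by
      rw [hassoc v w u]
      exact hcomm (b₂ + c₂) a₂ (μ v w) (hμgr _ _ v hv w hw) (αA u) (hαA _ u hu)
    have m3 : μ (αA w) (μ u v) = (ε (c₂ + a₂) b₂ * ε (b₂ + c₂) a₂) • μ (αA u) (μ v w) := by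
      rw [hassoc w u v,
        hcomm (c₂ + a₂) b₂ (μ w u) (hμgr _ _ w hw u hu) (αA v) (hαA _ v hv),
        m2, smul_smul]
    rw [hbrT b₁ b₂ c₁ c₂ y hy v hv z hz w hw, map_smul,
      hbrT a₁ a₂ (b₁ + c₁) (b₂ + c₂) (αg x) (hα _ x hx) (αA u) (hαA _ u hu)
        (br y z) (hgr _ _ y hy z hz) (μ v w) (hμgr _ _ v hv w hw),
      hbrT c₁ c₂ a₁ a₂ z hz w hw x hx u hu, map_smul,
      hbrT b₁ b₂ (c₁ + a₁) (c₂ + a₂) (αg y) (hα _ y hy) (αA v) (hαA _ v hv)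
        (br z x) (hgr _ _ z hz x hx) (μ w u) (hμgr _ _ w hw u hu),
      hbrT a₁ a₂ b₁ b₂ x hx u hu y hy v hv, map_smul,
      hbrT c₁ c₂ (a₁ + b₁) (a₂ + b₂) (αg z) (hα _ z hz) (αA w) (hαA _ w hw)
        (br x y) (hgr _ _ x hx y hy) (μ u v) (hμgr _ _ u hu v hv),
      m2, m3]
    simp only [TensorProduct.tmul_smul, smul_smul]
    have key := hjac a₁ b₁ c₁ x hx y hy z hz
    have e1 : ε (c₁ + c₂) (a₁ + a₂) * (ε b₂ c₁ * ε a₂ (b₁ + c₁)) = (ε a₂ b₁ * ε b₂ c₁ * ε c₂ a₁ * ε c₂ a₂) * ε c₁ a₁ := by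
      simp only [hεadd₁, hεadd₂]
      linear_combination (ε c₁ a₁ * ε c₂ a₁ * ε c₂ a₂ * ε b₂ c₁ * ε a₂ b₁) * hεinv c₁ a₂
    have e2 : ε (a₁ + a₂) (b₁ + b₂) * (ε c₂ a₁ * (ε b₂ (c₁ + a₁) * ε (b₂ + c₂) a₂))
        = (ε a₂ b₁ * ε b₂ c₁ * ε c₂ a₁ * ε c₂ a₂) * ε a₁ b₁ := by
      simp only [hεadd₁, hεadd₂]
      linear_combination
        (ε a₁ b₁ * ε a₂ b₁ * ε c₂ a₁ * ε b₂ c₁ * ε c₂ a₂ * (ε a₂ b₂ * ε b₂ a₂)) * hεinv a₁ b₂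
        + (ε a₁ b₁ * ε a₂ b₁ * ε c₂ a₁ * ε b₂ c₁ * ε c₂ a₂) * hεinv a₂ b₂
    have e3 : ε (b₁ + b₂) (c₁ + c₂) * (ε a₂ b₁ * (ε c₂ (a₁ + b₁) * (ε (c₂ + a₂) b₂ * ε (b₂ + c₂) a₂)))
        = (ε a₂ b₁ * ε b₂ c₁ * ε c₂ a₁ * ε c₂ a₂) * ε b₁ c₁ := by
      simp only [hεadd₁, hεadd₂]
      linear_combination
        (ε b₁ c₁ * ε b₂ c₁ * ε a₂ b₁ * ε c₂ a₁ * ε c₂ a₂ * (ε b₂ c₂ * ε c₂ b₂) * (ε a₂ b₂ * ε b₂ a₂)) * hεinv b₁ c₂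
        + (ε b₁ c₁ * ε b₂ c₁ * ε a₂ b₁ * ε c₂ a₁ * ε c₂ a₂ * (ε a₂ b₂ * ε b₂ a₂)) * hεinv b₂ c₂
        + (ε b₁ c₁ * ε b₂ c₁ * ε a₂ b₁ * ε c₂ a₁ * ε c₂ a₂) * hεinv a₂ b₂
    rw [e1, e2, e3]
    refine three_smul_zero _ _ _ _ _ _ _ ?_
    rw [TensorProduct.smul_tmul', TensorProduct.smul_tmul', TensorProduct.smul_tmul',
      ← TensorProduct.add_tmul, ← TensorProduct.add_tmul, key, TensorProduct.zero_tmul]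
end

section
/- With the hypotheses of the tensor product construction, if B_A is an associative scalar product on A and B_g an invariant scalar product on g, then B(x⊗a, y⊗b) = ε(a,y) B_g(x,y) B_A(a,b) is an invariant scalar product on the color Hom-Lie algebra g⊗A, making it quadratic. -/
variable {K : Type*} [Field K] {Γ : Type*} [AddCommGroup Γ]
variable {V : Type*} [AddCommGroup V] [Module K V]

open scoped TensorProduct

variable {A : Type*} [AddCommGroup A] [Module K A]

/-! Every identity to be checked is multilinear, and `V ⊗ A` is spanned by the tensors `x ⊗ u`
of homogeneous elements, so it suffices to check it on those; there the bicharacter rules reduce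
it to the corresponding identity of `g` and of `A`. In the Jacobi identity, Hom-associativity and
`ε`-commutativity of `A` turn the three `A`-factors into multiples of one element
`μ (α u) (μ v w)`, leaving a scalar multiple of the Jacobi identity of `g`.

For nondegeneracy expand `t = ∑ⱼ xⱼ ⊗ eⱼ` along a homogeneous basis `(eⱼ)` of `A`. Pairing `t`
with `y ⊗ v`, `y` homogeneous of degree `γ`, gives `B_A (∑ⱼ ε(|eⱼ|, γ) B_g(xⱼ, y) eⱼ, v)`, so
nondegeneracy of `B_A` kills every coefficient `B_g(xⱼ, y)`, and nondegeneracy of `B_g` every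
`xⱼ`. -/

namespace IsBicharacter

variable {ε : Γ → Γ → K}

theorem mul_swap_eq_one (hε : IsBicharacter ε) (a b : Γ) : ε a b * ε b a = 1 := hε.1 a b

theorem map_add_right (hε : IsBicharacter ε) (a b c : Γ) : ε a (b + c) = ε a b * ε a c :=
  hε.2.1 a b c

theorem map_add_left (hε : IsBicharacter ε) (a b c : Γ) : ε (a + b) c = ε a c * ε b c :=
  hε.2.2 a b c

theorem ne_zero (hε : IsBicharacter ε) (a b : Γ) : ε a b ≠ 0 :=
  left_ne_zero_of_mul_eq_one (hε.mul_swap_eq_one a b)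

end IsBicharacter

section Span

variable {R M N L P : Type*} [CommSemiring R] [AddCommMonoid M] [AddCommMonoid N]
  [AddCommMonoid L] [AddCommMonoid P] [Module R M] [Module R N] [Module R L] [Module R P]
  {s : Set M} {t : Set N} {r : Set L}

theorem LinearMap.apply_apply_mem_of_mem_span (F : M →ₗ[R] N →ₗ[R] P) {Q : Submodule R P}
    (h : ∀ x ∈ s, ∀ y ∈ t, F x y ∈ Q) {x : M} {y : N} (hx : x ∈ Submodule.span R s)
    (hy : y ∈ Submodule.span R t) : F x y ∈ Q :=
  Submodule.map₂_le.1 (by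
    rw [Submodule.map₂_span_span, Submodule.span_le]
    rintro _ ⟨x, hx, y, hy, rfl⟩
    exact h x hx y hy) x hx y hy

theorem LinearMap.eqOn_span₂ {F G : M →ₗ[R] N →ₗ[R] P} (h : ∀ x ∈ s, ∀ y ∈ t, F x y = G x y)
    {x : M} {y : N} (hx : x ∈ Submodule.span R s) (hy : y ∈ Submodule.span R t) :
    F x y = G x y :=
  LinearMap.eqOn_span (f := F.flip y) (g := G.flip y)
    (fun x' hx' => LinearMap.eqOn_span (fun y' hy' => h x' hx' y' hy') hy) hx

theorem LinearMap.eqOn_span₃ {F G : M →ₗ[R] N →ₗ[R] L →ₗ[R] P}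
    (h : ∀ x ∈ s, ∀ y ∈ t, ∀ z ∈ r, F x y z = G x y z) {x : M} {y : N} {z : L}
    (hx : x ∈ Submodule.span R s) (hy : y ∈ Submodule.span R t)
    (hz : z ∈ Submodule.span R r) : F x y z = G x y z :=
  LinearMap.eqOn_span (f := (F.flip y).flip z) (g := (G.flip y).flip z)
    (fun x' hx' => LinearMap.eqOn_span₂ (h x' hx') hy hz) hx

end Span

section Internal

variable {ι R M N P : Type*} [DecidableEq ι] [CommSemiring R] [AddCommMonoid M]
  [AddCommMonoid N] [AddCommMonoid P] [Module R M] [Module R N] [Module R P]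
  {G : ι → Submodule R M} {H : ι → Submodule R N}

theorem DirectSum.IsInternal.span_iUnion_eq_top (hG : DirectSum.IsInternal G) :
    Submodule.span R (⋃ i, (G i : Set M)) = ⊤ := by
  rw [← Submodule.iSup_eq_span, hG.submodule_iSup_eq_top]

theorem DirectSum.IsInternal.linearMap_ext (hG : DirectSum.IsInternal G) {f g : M →ₗ[R] P}
    (h : ∀ i, ∀ x ∈ G i, f x = g x) : f = g :=
  LinearMap.ext_on hG.span_iUnion_eq_top fun x hx => by
    obtain ⟨i, hx⟩ := Set.mem_iUnion.1 hx
    exact h i x hx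

theorem DirectSum.IsInternal.span_tmul_eq_top (hG : DirectSum.IsInternal G)
    (hH : DirectSum.IsInternal H) :
    Submodule.span R {t : M ⊗[R] N | ∃ i j, ∃ x ∈ G i, ∃ y ∈ H j, t = x ⊗ₜ[R] y} = ⊤ := by
  have h := Submodule.map₂_span_span R (TensorProduct.mk R M N) (⋃ i, (G i : Set M))
    (⋃ j, (H j : Set N))
  rw [hG.span_iUnion_eq_top, hH.span_iUnion_eq_top, TensorProduct.map₂_mk_top_top_eq_top] at h
  refine eq_top_iff.2 (h ▸ Submodule.span_mono ?_)
  rintro _ ⟨x, hx, y, hy, rfl⟩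
  obtain ⟨i, hx⟩ := Set.mem_iUnion.1 hx
  obtain ⟨j, hy⟩ := Set.mem_iUnion.1 hy
  exact ⟨i, j, x, hx, y, hy, rfl⟩

end Internal

def tensorGrading (Gg : Γ → Submodule K V) (GA : Γ → Submodule K A) (δ : Γ) :
    Submodule K (V ⊗[K] A) :=
  Submodule.span K {t | ∃ a b, a + b = δ ∧ ∃ x ∈ Gg a, ∃ u ∈ GA b, t = x ⊗ₜ[K] u}

def IsColorTensorBracket {ι : Type*} (ε : ι → ι → K) (Gg : ι → Submodule K V)
    (GA : ι → Submodule K A) (br : V →ₗ[K] V →ₗ[K] V) (μ : A →ₗ[K] A →ₗ[K] A)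
    (brT : (V ⊗[K] A) →ₗ[K] (V ⊗[K] A) →ₗ[K] (V ⊗[K] A)) : Prop :=
  ∀ a b c d, ∀ x ∈ Gg a, ∀ u ∈ GA b, ∀ y ∈ Gg c, ∀ v ∈ GA d,
    brT (x ⊗ₜ[K] u) (y ⊗ₜ[K] v) = ε b c • (br x y ⊗ₜ[K] μ u v)

def IsColorTensorForm {ι : Type*} (ε : ι → ι → K) (Gg : ι → Submodule K V)
    (GA : ι → Submodule K A) (Bg : V →ₗ[K] V →ₗ[K] K) (BA : A →ₗ[K] A →ₗ[K] K)
    (BT : (V ⊗[K] A) →ₗ[K] (V ⊗[K] A) →ₗ[K] K) : Prop :=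
  ∀ a b c d, ∀ x ∈ Gg a, ∀ u ∈ GA b, ∀ y ∈ Gg c, ∀ v ∈ GA d,
    BT (x ⊗ₜ[K] u) (y ⊗ₜ[K] v) = ε b c * (Bg x y * BA u v)

section IndexedForm

variable {ι : Type*} [DecidableEq ι] {ε : ι → ι → K} {Gg : ι → Submodule K V}
  {GA : ι → Submodule K A} {Bg : V →ₗ[K] V →ₗ[K] K} {BA : A →ₗ[K] A →ₗ[K] K}
  {BT : (V ⊗[K] A) →ₗ[K] (V ⊗[K] A) →ₗ[K] K}

theorem tensorForm_tmul_tmul (hGg : DirectSum.IsInternal Gg)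
    (hBT : IsColorTensorForm ε Gg GA Bg BA BT) (x : V) {b c d : ι} {u : A} {y : V} {v : A}
    (hu : u ∈ GA b) (hy : y ∈ Gg c) (hv : v ∈ GA d) :
    BT (x ⊗ₜ[K] u) (y ⊗ₜ[K] v) = ε b c * (Bg x y * BA u v) := by
  have key : BT.flip (y ⊗ₜ v) ∘ₗ (TensorProduct.mk K V A).flip u =
      (ε b c * BA u v) • Bg.flip y := hGg.linearMap_ext fun a x hx => by
    simp only [LinearMap.comp_apply, LinearMap.flip_apply, TensorProduct.mk_apply,
      LinearMap.smul_apply, hBT a b c d x hx u hu y hy v hv, smul_eq_mul]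
    ring
  rw [show BT (x ⊗ₜ u) (y ⊗ₜ v) = ε b c * BA u v * Bg x y from LinearMap.congr_fun key x]
  ring

theorem tensorForm_map_symm {αg : V →ₗ[K] V} {αA : A →ₗ[K] A}
    (hGg : DirectSum.IsInternal Gg) (hGA : DirectSum.IsInternal GA)
    (hαg : ∀ a, ∀ x ∈ Gg a, αg x ∈ Gg a) (hαA : ∀ a, ∀ u ∈ GA a, αA u ∈ GA a)
    (hBg : ∀ x y, Bg (αg x) y = Bg x (αg y)) (hBA : ∀ u v, BA (αA u) v = BA u (αA v))
    (hBT : IsColorTensorForm ε Gg GA Bg BA BT) (s t : V ⊗[K] A) :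
    BT (TensorProduct.map αg αA s) t = BT s (TensorProduct.map αg αA t) := by
  have hspan := hGg.span_tmul_eq_top hGA
  refine LinearMap.eqOn_span₂ (F := BT ∘ₗ TensorProduct.map αg αA)
    (G := BT.compl₂ (TensorProduct.map αg αA)) ?_
    (hspan ▸ Submodule.mem_top) (hspan ▸ Submodule.mem_top)
  rintro _ ⟨a₁, a₂, x, hx, u, hu, rfl⟩ _ ⟨b₁, b₂, y, hy, v, hv, rfl⟩
  rw [LinearMap.comp_apply, LinearMap.compl₂_apply, TensorProduct.map_tmul,
    TensorProduct.map_tmul, hBT a₁ a₂ b₁ b₂ _ (hαg a₁ x hx) _ (hαA a₂ u hu) y hy v hv,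
    hBT a₁ a₂ b₁ b₂ x hx u hu _ (hαg b₁ y hy) _ (hαA b₂ v hv), hBg, hBA]

end IndexedForm

section TensorProduct

variable {ε : Γ → Γ → K} {Gg : Γ → Submodule K V} {GA : Γ → Submodule K A}
  {br : V →ₗ[K] V →ₗ[K] V} {μ : A →ₗ[K] A →ₗ[K] A} {Bg : V →ₗ[K] V →ₗ[K] K}
  {BA : A →ₗ[K] A →ₗ[K] K} {brT : (V ⊗[K] A) →ₗ[K] (V ⊗[K] A) →ₗ[K] (V ⊗[K] A)}
  {BT : (V ⊗[K] A) →ₗ[K] (V ⊗[K] A) →ₗ[K] K}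

theorem tensorBracket_mem_tensorGrading
    (hbr : ∀ a b, ∀ x ∈ Gg a, ∀ y ∈ Gg b, br x y ∈ Gg (a + b))
    (hμ : ∀ a b, ∀ u ∈ GA a, ∀ v ∈ GA b, μ u v ∈ GA (a + b))
    (hbrT : IsColorTensorBracket ε Gg GA br μ brT) {a b : Γ} {s t : V ⊗[K] A}
    (hs : s ∈ tensorGrading Gg GA a) (ht : t ∈ tensorGrading Gg GA b) :
    brT s t ∈ tensorGrading Gg GA (a + b) := by
  refine LinearMap.apply_apply_mem_of_mem_span brT ?_ hs ht
  rintro _ ⟨a₁, a₂, rfl, x, hx, u, hu, rfl⟩ _ ⟨b₁, b₂, rfl, y, hy, v, hv, rfl⟩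
  rw [hbrT a₁ a₂ b₁ b₂ x hx u hu y hy v hv]
  exact Submodule.smul_mem _ _ <| Submodule.subset_span
    ⟨a₁ + b₁, a₂ + b₂, add_add_add_comm .., br x y, hbr _ _ x hx y hy, μ u v, hμ _ _ u hu v hv,
      rfl⟩

theorem map_mem_tensorGrading {αg : V →ₗ[K] V} {αA : A →ₗ[K] A}
    (hαg : ∀ a, ∀ x ∈ Gg a, αg x ∈ Gg a) (hαA : ∀ a, ∀ u ∈ GA a, αA u ∈ GA a) {δ : Γ}
    {s : V ⊗[K] A} (hs : s ∈ tensorGrading Gg GA δ) :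
    TensorProduct.map αg αA s ∈ tensorGrading Gg GA δ := by
  refine Submodule.span_le.2 ?_ (Submodule.apply_mem_span_image_of_mem_span _ hs)
  rintro _ ⟨_, ⟨a, b, hab, x, hx, u, hu, rfl⟩, rfl⟩
  exact Submodule.subset_span ⟨a, b, hab, αg x, hαg a x hx, αA u, hαA b u hu, rfl⟩

theorem tensorBracket_skew (hε : IsBicharacter ε)
    (hskew : ∀ a b, ∀ x ∈ Gg a, ∀ y ∈ Gg b, br x y = -(ε a b) • br y x)
    (hcomm : ∀ a b, ∀ u ∈ GA a, ∀ v ∈ GA b, μ u v = ε a b • μ v u)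
    (hbrT : IsColorTensorBracket ε Gg GA br μ brT) {a b : Γ} {s t : V ⊗[K] A}
    (hs : s ∈ tensorGrading Gg GA a) (ht : t ∈ tensorGrading Gg GA b) :
    brT s t = -(ε a b) • brT t s := by
  refine LinearMap.eqOn_span₂ (G := -(ε a b) • brT.flip) ?_ hs ht
  rintro _ ⟨a₁, a₂, rfl, x, hx, u, hu, rfl⟩ _ ⟨b₁, b₂, rfl, y, hy, v, hv, rfl⟩
  rw [LinearMap.smul_apply, LinearMap.smul_apply, LinearMap.flip_apply,
    hbrT a₁ a₂ b₁ b₂ x hx u hu y hy v hv,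
    hbrT b₁ b₂ a₁ a₂ y hy v hv x hx u hu, hskew a₁ b₁ x hx y hy, hcomm a₂ b₂ u hu v hv,
    TensorProduct.tmul_smul, ← TensorProduct.smul_tmul', smul_smul, smul_smul, smul_smul]
  congr 1
  simp only [hε.map_add_left, hε.map_add_right]
  grind [hε.mul_swap_eq_one]

theorem tensorForm_symm (hε : IsBicharacter ε)
    (hBg : ∀ a b, ∀ x ∈ Gg a, ∀ y ∈ Gg b, Bg x y = ε a b * Bg y x)
    (hBA : ∀ a b, ∀ u ∈ GA a, ∀ v ∈ GA b, BA u v = ε a b * BA v u)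
    (hBT : IsColorTensorForm ε Gg GA Bg BA BT) {a b : Γ} {s t : V ⊗[K] A}
    (hs : s ∈ tensorGrading Gg GA a) (ht : t ∈ tensorGrading Gg GA b) :
    BT s t = ε a b * BT t s := by
  refine LinearMap.eqOn_span₂ (G := ε a b • BT.flip) ?_ hs ht
  rintro _ ⟨a₁, a₂, rfl, x, hx, u, hu, rfl⟩ _ ⟨b₁, b₂, rfl, y, hy, v, hv, rfl⟩
  rw [LinearMap.smul_apply, LinearMap.smul_apply, LinearMap.flip_apply,
    hBT a₁ a₂ b₁ b₂ x hx u hu y hy v hv,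
    hBT b₁ b₂ a₁ a₂ y hy v hv x hx u hu, hBg a₁ b₁ x hx y hy, hBA a₂ b₂ u hu v hv, smul_eq_mul]
  simp only [hε.map_add_left, hε.map_add_right]
  grind [hε.mul_swap_eq_one]

theorem homAssoc_rotate {αA : A →ₗ[K] A}
    (hμ : ∀ a b, ∀ u ∈ GA a, ∀ v ∈ GA b, μ u v ∈ GA (a + b))
    (hαA : ∀ a, ∀ u ∈ GA a, αA u ∈ GA a)
    (hassoc : ∀ u v w, μ (αA u) (μ v w) = μ (μ u v) (αA w))
    (hcomm : ∀ a b, ∀ u ∈ GA a, ∀ v ∈ GA b, μ u v = ε a b • μ v u)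
    {a b c : Γ} {u v w : A} (hu : u ∈ GA a) (hv : v ∈ GA b) (hw : w ∈ GA c) :
    μ (αA v) (μ w u) = ε (b + c) a • μ (αA u) (μ v w) := by
  rw [hassoc, hcomm _ _ _ (hμ b c v hv w hw) _ (hαA a u hu)]

theorem tensorBracket_jacobi (hε : IsBicharacter ε) {αg : V →ₗ[K] V} {αA : A →ₗ[K] A}
    (hbr : ∀ a b, ∀ x ∈ Gg a, ∀ y ∈ Gg b, br x y ∈ Gg (a + b))
    (hαg : ∀ a, ∀ x ∈ Gg a, αg x ∈ Gg a)
    (hjac : ∀ a b c, ∀ x ∈ Gg a, ∀ y ∈ Gg b, ∀ z ∈ Gg c,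
      ε c a • br (αg x) (br y z) + ε a b • br (αg y) (br z x) + ε b c • br (αg z) (br x y) = 0)
    (hμ : ∀ a b, ∀ u ∈ GA a, ∀ v ∈ GA b, μ u v ∈ GA (a + b))
    (hαA : ∀ a, ∀ u ∈ GA a, αA u ∈ GA a)
    (hassoc : ∀ u v w, μ (αA u) (μ v w) = μ (μ u v) (αA w))
    (hcomm : ∀ a b, ∀ u ∈ GA a, ∀ v ∈ GA b, μ u v = ε a b • μ v u)
    (hbrT : IsColorTensorBracket ε Gg GA br μ brT) {a b c : Γ} {s t r : V ⊗[K] A}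
    (hs : s ∈ tensorGrading Gg GA a) (ht : t ∈ tensorGrading Gg GA b)
    (hr : r ∈ tensorGrading Gg GA c) :
    ε c a • brT (TensorProduct.map αg αA s) (brT t r)
      + ε a b • brT (TensorProduct.map αg αA t) (brT r s)
      + ε b c • brT (TensorProduct.map αg αA r) (brT s t) = 0 := by
  let α := TensorProduct.map αg αA
  let T : (V ⊗[K] A) →ₗ[K] (V ⊗[K] A) →ₗ[K] (V ⊗[K] A) →ₗ[K] (V ⊗[K] A) :=
    LinearMap.lcomp K _ brT ∘ₗ LinearMap.llcomp K _ _ _ ∘ₗ brT ∘ₗ α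
  -- `T s t r = brT (α s) (brT t r)` and `rotate S s t r = S t r s`
  let rotate (S : (V ⊗[K] A) →ₗ[K] (V ⊗[K] A) →ₗ[K] (V ⊗[K] A) →ₗ[K] (V ⊗[K] A)) :=
    (LinearMap.lflip.toLinearMap ∘ₗ S).flip
  refine LinearMap.eqOn_span₃ (F := ε c a • T + ε a b • rotate T + ε b c • rotate (rotate T))
    (G := 0) ?_ hs ht hr
  rintro _ ⟨a₁, a₂, rfl, x, hx, u, hu, rfl⟩ _ ⟨b₁, b₂, rfl, y, hy, v, hv, rfl⟩
    _ ⟨c₁, c₂, rfl, z, hz, w, hw, rfl⟩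
  show ε (c₁ + c₂) (a₁ + a₂) • brT (α (x ⊗ₜ u)) (brT (y ⊗ₜ v) (z ⊗ₜ w))
    + ε (a₁ + a₂) (b₁ + b₂) • brT (α (y ⊗ₜ v)) (brT (z ⊗ₜ w) (x ⊗ₜ u))
    + ε (b₁ + b₂) (c₁ + c₂) • brT (α (z ⊗ₜ w)) (brT (x ⊗ₜ u) (y ⊗ₜ v)) = 0
  simp only [α, TensorProduct.map_tmul]
  rw [hbrT b₁ b₂ c₁ c₂ y hy v hv z hz w hw, hbrT c₁ c₂ a₁ a₂ z hz w hw x hx u hu,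
    hbrT a₁ a₂ b₁ b₂ x hx u hu y hy v hv, map_smul, map_smul, map_smul,
    hbrT a₁ a₂ (b₁ + c₁) (b₂ + c₂) _ (hαg a₁ x hx) _ (hαA a₂ u hu)
      _ (hbr b₁ c₁ y hy z hz) _ (hμ b₂ c₂ v hv w hw),
    hbrT b₁ b₂ (c₁ + a₁) (c₂ + a₂) _ (hαg b₁ y hy) _ (hαA b₂ v hv)
      _ (hbr c₁ a₁ z hz x hx) _ (hμ c₂ a₂ w hw u hu),
    hbrT c₁ c₂ (a₁ + b₁) (a₂ + b₂) _ (hαg c₁ z hz) _ (hαA c₂ w hw)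
      _ (hbr a₁ b₁ x hx y hy) _ (hμ a₂ b₂ u hu v hv),
    homAssoc_rotate hμ hαA hassoc hcomm hv hw hu, homAssoc_rotate hμ hαA hassoc hcomm hu hv hw]
  -- the three terms are multiples of `μ (αA u) (μ v w)`, with coefficients proportional to those
  -- of the Jacobi identity of `g`
  have hJ : (ε c₂ a₁ * ε c₂ a₂ * ε b₂ c₁ * ε a₂ b₁) •
      ((ε c₁ a₁ • br (αg x) (br y z) + ε a₁ b₁ • br (αg y) (br z x)
        + ε b₁ c₁ • br (αg z) (br x y)) ⊗ₜ[K] μ (αA u) (μ v w)) = 0 := by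
    rw [hjac a₁ b₁ c₁ x hx y hy z hz, TensorProduct.zero_tmul, smul_zero]
  rw [← hJ]
  simp only [TensorProduct.add_tmul, TensorProduct.tmul_smul, ← TensorProduct.smul_tmul',
    smul_add, smul_smul]
  match_scalars <;> simp only [hε.map_add_left, hε.map_add_right] <;> grind [hε.mul_swap_eq_one]

theorem tensorForm_invariant [DecidableEq Γ] (hε : IsBicharacter ε)
    (hGg : DirectSum.IsInternal Gg) (hGA : DirectSum.IsInternal GA)
    (hbr : ∀ a b, ∀ x ∈ Gg a, ∀ y ∈ Gg b, br x y ∈ Gg (a + b))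
    (hμ : ∀ a b, ∀ u ∈ GA a, ∀ v ∈ GA b, μ u v ∈ GA (a + b))
    (hBg : ∀ x y z, Bg (br x y) z = Bg x (br y z)) (hBA : ∀ u v w, BA (μ u v) w = BA u (μ v w))
    (hbrT : IsColorTensorBracket ε Gg GA br μ brT) (hBT : IsColorTensorForm ε Gg GA Bg BA BT)
    (s t r : V ⊗[K] A) : BT (brT s t) r = BT s (brT t r) := by
  have hspan := hGg.span_tmul_eq_top hGA
  refine LinearMap.eqOn_span₃ (F := brT.compr₂ BT)
    (G := LinearMap.lcomp K _ brT ∘ₗ LinearMap.llcomp K _ _ _ ∘ₗ BT) ?_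
    (hspan ▸ Submodule.mem_top) (hspan ▸ Submodule.mem_top) (hspan ▸ Submodule.mem_top)
  rintro _ ⟨a₁, a₂, x, hx, u, hu, rfl⟩ _ ⟨b₁, b₂, y, hy, v, hv, rfl⟩
    _ ⟨c₁, c₂, z, hz, w, hw, rfl⟩
  show BT (brT _ _) _ = BT _ (brT _ _)
  rw [hbrT a₁ a₂ b₁ b₂ x hx u hu y hy v hv, hbrT b₁ b₂ c₁ c₂ y hy v hv z hz w hw, map_smul,
    map_smul, LinearMap.smul_apply, hBT (a₁ + b₁) (a₂ + b₂) c₁ c₂ _ (hbr a₁ b₁ x hx y hy)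
      _ (hμ a₂ b₂ u hu v hv) z hz w hw,
    hBT a₁ a₂ (b₁ + c₁) (b₂ + c₂) x hx u hu _ (hbr b₁ c₁ y hy z hz) _ (hμ b₂ c₂ v hv w hw),
    hBg, hBA, smul_eq_mul, smul_eq_mul, hε.map_add_left, hε.map_add_right]
  ring

theorem tensorForm_nondegenerate [DecidableEq Γ] (hε : IsBicharacter ε)
    (hGg : DirectSum.IsInternal Gg) (hGA : DirectSum.IsInternal GA)
    (hBg : ∀ x, (∀ y, Bg x y = 0) → x = 0) (hBA : ∀ u, (∀ v, BA u v = 0) → u = 0)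
    (hBT : IsColorTensorForm ε Gg GA Bg BA BT) (t : V ⊗[K] A) (ht : ∀ s, BT t s = 0) :
    t = 0 := by
  let e := hGA.collectedBasis fun i => Module.Basis.ofVectorSpace K (GA i)
  have he : ∀ j, e j ∈ GA j.1 := hGA.collectedBasis_mem _
  obtain ⟨c, rfl⟩ := TensorProduct.eq_repr_basis_right e t
  suffices c = 0 by simp [this]
  ext j
  refine hBg _ fun y => LinearMap.congr_fun (hGg.linearMap_ext (f := Bg (c j)) (g := 0)
    fun γ y hy => ?_) y
  have hpair : BT (c.sum fun i x => x ⊗ₜ e i) ∘ₗ TensorProduct.mk K V A y =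
      BA (c.sum fun i x => (ε i.1 γ * Bg x y) • e i) := hGA.linearMap_ext fun d v hv => by
    simp only [LinearMap.comp_apply, TensorProduct.mk_apply, Finsupp.sum, map_sum,
      LinearMap.sum_apply, map_smul, LinearMap.smul_apply, smul_eq_mul,
      tensorForm_tmul_tmul hGg hBT _ (he _) hy hv]
    exact Finset.sum_congr rfl fun i _ => by ring
  have hzero : (c.sum fun i x => (ε i.1 γ * Bg x y) • e i) = 0 :=
    hBA _ fun v => by rw [← hpair]; exact ht _
  by_cases hj : j ∈ c.support
  · exact (mul_eq_zero.1 (linearIndependent_iff'.1 e.linearIndependent _ _ hzero j hj)).resolve_left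
      (hε.ne_zero _ _)
  · simp [Finsupp.notMem_support_iff.1 hj]

end TensorProduct

/-- If `B_A` is an associative scalar product on a commutative color
Hom-associative algebra `A` and `B_g` an invariant scalar product on a color
Hom-Lie algebra `g`, then `B(x⊗a, y⊗b) = ε(a,y) B_g(x,y) B_A(a,b)` is an
invariant scalar product on the tensor product color Hom-Lie algebra `g ⊗ A`,
which is therefore quadratic. -/
theorem stmt12 [DecidableEq Γ] (ε : Γ → Γ → K) (hε : IsBicharacter ε)
    (Gg : Γ → Submodule K V) (br : V →ₗ[K] V →ₗ[K] V) (αg : V →ₗ[K] V)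
    (Bg : V →ₗ[K] V →ₗ[K] K)
    (hg : IsQuadColorHomLie ε Gg br αg Bg)
    (hGgint : DirectSum.IsInternal Gg)
    (GA : Γ → Submodule K A) (μ : A →ₗ[K] A →ₗ[K] A) (αA : A →ₗ[K] A)
    (BA : A →ₗ[K] A →ₗ[K] K)
    (hGAint : DirectSum.IsInternal GA)
    (hμgr : ∀ a b, ∀ u ∈ GA a, ∀ v ∈ GA b, μ u v ∈ GA (a + b))
    (hαA : ∀ a, ∀ u ∈ GA a, αA u ∈ GA a)
    (hassoc : ∀ u v w, μ (αA u) (μ v w) = μ (μ u v) (αA w))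
    (hcomm : ∀ a b, ∀ u ∈ GA a, ∀ v ∈ GA b, μ u v = ε a b • μ v u)
    (hBAnd : ∀ u, (∀ v, BA u v = 0) → u = 0)
    (hBAsym : ∀ a b, ∀ u ∈ GA a, ∀ v ∈ GA b, BA u v = ε a b * BA v u)
    (hBAinv : ∀ u v w, BA (μ u v) w = BA u (μ v w))
    (hBAα : ∀ u v, BA (αA u) v = BA u (αA v))
    (brT : (V ⊗[K] A) →ₗ[K] (V ⊗[K] A) →ₗ[K] (V ⊗[K] A))
    (hbrT : ∀ a b c d : Γ, ∀ x ∈ Gg a, ∀ u ∈ GA b, ∀ y ∈ Gg c, ∀ v ∈ GA d,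
      brT (x ⊗ₜ[K] u) (y ⊗ₜ[K] v) = ε b c • (br x y ⊗ₜ[K] μ u v))
    (BT : (V ⊗[K] A) →ₗ[K] (V ⊗[K] A) →ₗ[K] K)
    (hBT : ∀ a b c d : Γ, ∀ x ∈ Gg a, ∀ u ∈ GA b, ∀ y ∈ Gg c, ∀ v ∈ GA d,
      BT (x ⊗ₜ[K] u) (y ⊗ₜ[K] v) = ε b c * (Bg x y * BA u v)) :
    IsQuadColorHomLie ε
      (fun δ => Submodule.span K
        {t : V ⊗[K] A | ∃ a b, a + b = δ ∧ ∃ x ∈ Gg a, ∃ u ∈ GA b, t = x ⊗ₜ[K] u})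
      brT (TensorProduct.map αg αA) BT := by
  obtain ⟨⟨hbr, hαg, hskew, hjac⟩, hBgnd, hBgsym, hBginv, hBgα⟩ := hg
  refine ⟨⟨fun a b s hs t ht => tensorBracket_mem_tensorGrading hbr hμgr hbrT hs ht,
      fun δ s hs => map_mem_tensorGrading hαg hαA hs,
      fun a b s hs t ht => tensorBracket_skew hε hskew hcomm hbrT hs ht,
      fun a b c s hs t ht r hr =>
        tensorBracket_jacobi hε hbr hαg hjac hμgr hαA hassoc hcomm hbrT hs ht hr⟩,
    tensorForm_nondegenerate hε hGgint hGAint hBgnd hBAnd hBT,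
    fun a b s hs t ht => tensorForm_symm hε hBgsym hBAsym hBT hs ht,
    tensorForm_invariant hε hGgint hGAint hbr hμgr hBginv hBAinv hbrT hBT,
    tensorForm_map_symm hGgint hGAint hαg hαA hBgα hBAα hBT⟩
end

section
/- Let (g,[·,·],α,ε) be a color Hom-Lie algebra with a representation ρ on (M,β), and let ρ̃: g → End(M*) be defined by ρ̃(x)(f) = −ε(x,f) f∘ρ(x), with β̃(f) = f∘β. Then ρ̃ is a representation of g on (M*,β̃) if and only if ρ(x)∘ρ(α(y)) − ε(x,y)ρ(y)∘ρ(α(x)) = β∘ρ([x,y]) for all homogeneous x,y ∈ g. -/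
variable {K : Type*} [Field K] {Γ : Type*} [AddCommGroup Γ]
variable {V : Type*} [AddCommGroup V] [Module K V]

variable {M : Type*} [AddCommGroup M] [Module K M]

/-! Evaluated at `m`, the representation identity for `ρ̃` on a functional `f` of degree `c`
becomes `ε(a,c) ε(b,c) f(D m) = 0`, where `D = ρ(x)∘ρ(α y) − ε(x,y) ρ(y)∘ρ(α x) − β∘ρ([x,y])`;
the ε-factors collapse because `ε(a,b) ε(b,a) = 1`. Since `ε` never vanishes and homogeneous
functionals separate the points of `M`, the two identities are equivalent. -/

theorem IsBicharacter.ne_zero_s13 {ε : Γ → Γ → K} (hε : IsBicharacter ε) (a b : Γ) : ε a b ≠ 0 :=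
  left_ne_zero_of_mul_eq_one (hε.1 a b)

section DualRepresentation

variable {ε : Γ → Γ → K} {G : Γ → Submodule K V} {br : V →ₗ[K] V →ₗ[K] V} {α : V →ₗ[K] V}
  {β : M →ₗ[K] M} {ρ : V →ₗ[K] M →ₗ[K] M} {GD : Γ → Submodule K (Module.Dual K M)}
  {ρd : V →ₗ[K] Module.Dual K M →ₗ[K] Module.Dual K M} {βd : Module.Dual K M →ₗ[K] Module.Dual K M}

theorem dual_rep_defect_eq (hε : IsBicharacter ε)
    (hρdgr : ∀ a c, ∀ x ∈ G a, ∀ f ∈ GD c, ρd x f ∈ GD (a + c))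
    (hρd : ∀ a c, ∀ x ∈ G a, ∀ f ∈ GD c, ∀ m, ρd x f m = -(ε a c) * f (ρ x m))
    (hβdeven : ∀ c, ∀ f ∈ GD c, βd f ∈ GD c) (hβd : ∀ f m, βd f m = f (β m))
    {a b c : Γ} {x y : V} (hx : x ∈ G a) (hy : y ∈ G b)
    (hxy : br x y ∈ G (a + b)) (hαx : α x ∈ G a) (hαy : α y ∈ G b)
    {f : Module.Dual K M} (hf : f ∈ GD c) (m : M) :
    ρd (br x y) (βd f) m - (ρd (α x) (ρd y f) m - ε a b * ρd (α y) (ρd x f) m)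
      = ε a c * ε b c * f (ρ x (ρ (α y) m) - ε a b • ρ y (ρ (α x) m) - β (ρ (br x y) m)) := by
  obtain ⟨hsymm, hadd_right, hadd_left⟩ := hε
  rw [hρd _ _ _ hxy _ (hβdeven c f hf), hβd, hρd _ _ _ hαx _ (hρdgr b c y hy f hf),
    hρd b c y hy f hf, hρd _ _ _ hαy _ (hρdgr a c x hx f hf), hρd a c x hx f hf,
    hadd_right, hadd_right, hadd_left]
  simp only [map_sub, map_smul, smul_eq_mul]
  linear_combination (ε a c * ε b c * f (ρ x (ρ (α y) m))) * hsymm a b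

end DualRepresentation

theorem stmt13_general (ε : Γ → Γ → K) (hε : IsBicharacter ε)
    (G : Γ → Submodule K V) (br : V →ₗ[K] V →ₗ[K] V) (α : V →ₗ[K] V)
    (h : IsColorHomLie ε G br α)
    (β : M →ₗ[K] M) (ρ : V →ₗ[K] M →ₗ[K] M)
    (GD : Γ → Submodule K (Module.Dual K M))
    (hsep : ∀ m : M, (∀ c, ∀ f ∈ GD c, f m = 0) → m = 0)
    (ρd : V →ₗ[K] Module.Dual K M →ₗ[K] Module.Dual K M)
    (hρdgr : ∀ a c, ∀ x ∈ G a, ∀ f ∈ GD c, ρd x f ∈ GD (a + c))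
    (hρd : ∀ a c, ∀ x ∈ G a, ∀ f ∈ GD c, ∀ m, ρd x f m = -(ε a c) * f (ρ x m))
    (βd : Module.Dual K M →ₗ[K] Module.Dual K M)
    (hβdeven : ∀ c, ∀ f ∈ GD c, βd f ∈ GD c)
    (hβd : ∀ f m, βd f m = f (β m)) :
    (∀ a b c, ∀ x ∈ G a, ∀ y ∈ G b, ∀ f ∈ GD c, ∀ m,
        ρd (br x y) (βd f) m
          = ρd (α x) (ρd y f) m - ε a b * ρd (α y) (ρd x f) m) ↔
      (∀ a b, ∀ x ∈ G a, ∀ y ∈ G b, ∀ m,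
        ρ x (ρ (α y) m) - ε a b • ρ y (ρ (α x) m) = β (ρ (br x y) m)) := by
  have defect {a b c : Γ} {x y : V} (hx : x ∈ G a) (hy : y ∈ G b) {f : Module.Dual K M}
      (hf : f ∈ GD c) (m : M) :=
    dual_rep_defect_eq (ρ := ρ) hε hρdgr hρd hβdeven hβd hx hy (h.1 a b x hx y hy)
      (h.2.1 a x hx) (h.2.1 b y hy) hf m
  constructor
  · intro H a b x hx y hy m
    refine sub_eq_zero.mp (hsep _ fun c f hf => ?_)
    have hzero := defect hx hy hf m
    rw [H a b c x hx y hy f hf m, sub_self, eq_comm] at hzero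
    exact (mul_eq_zero.mp hzero).resolve_left (mul_ne_zero (hε.ne_zero_s13 a c) (hε.ne_zero_s13 b c))
  · intro H a b c x hx y hy f hf m
    rw [← sub_eq_zero, defect hx hy hf m, sub_eq_zero.mpr (H a b x hx y hy m), map_zero, mul_zero]

/-- The dual map `ρ̃(x)(f) = −ε(x,f) f∘ρ(x)` is a representation of `g` on
`(M*, β̃)` if and only if
`ρ(x)∘ρ(α y) − ε(x,y) ρ(y)∘ρ(α x) = β∘ρ([x,y])` on homogeneous elements. -/
theorem stmt13 (ε : Γ → Γ → K) (hε : IsBicharacter ε)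
    (G : Γ → Submodule K V) (br : V →ₗ[K] V →ₗ[K] V) (α : V →ₗ[K] V)
    (h : IsColorHomLie ε G br α)
    (GM : Γ → Submodule K M) (β : M →ₗ[K] M) (ρ : V →ₗ[K] M →ₗ[K] M)
    (hρgr : ∀ a b, ∀ x ∈ G a, ∀ m ∈ GM b, ρ x m ∈ GM (a + b))
    (hβeven : ∀ b, ∀ m ∈ GM b, β m ∈ GM b)
    (hrep : ∀ a b, ∀ x ∈ G a, ∀ y ∈ G b, ∀ m,
      ρ (br x y) (β m) = ρ (α x) (ρ y m) - ε a b • ρ (α y) (ρ x m))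
    (GD : Γ → Submodule K (Module.Dual K M))
    (hsep : ∀ m : M, (∀ c, ∀ f ∈ GD c, f m = 0) → m = 0)
    (ρd : V →ₗ[K] Module.Dual K M →ₗ[K] Module.Dual K M)
    (hρdgr : ∀ a c, ∀ x ∈ G a, ∀ f ∈ GD c, ρd x f ∈ GD (a + c))
    (hρd : ∀ a c, ∀ x ∈ G a, ∀ f ∈ GD c, ∀ m, ρd x f m = -(ε a c) * f (ρ x m))
    (βd : Module.Dual K M →ₗ[K] Module.Dual K M)
    (hβdeven : ∀ c, ∀ f ∈ GD c, βd f ∈ GD c)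
    (hβd : ∀ f m, βd f m = f (β m)) :
    (∀ a b c, ∀ x ∈ G a, ∀ y ∈ G b, ∀ f ∈ GD c, ∀ m,
        ρd (br x y) (βd f) m
          = ρd (α x) (ρd y f) m - ε a b * ρd (α y) (ρd x f) m) ↔
      (∀ a b, ∀ x ∈ G a, ∀ y ∈ G b, ∀ m,
        ρ x (ρ (α y) m) - ε a b • ρ y (ρ (α x) m) = β (ρ (br x y) m)) :=
  stmt13_general ε hε G br α h β ρ GD hsep ρd hρdgr hρd βd hβdeven hβd
end
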